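/- Let M = 3/2 − √2 and κ = 1038/1000, and for ξ ∈ [0,1] define G_ξ(w,f) = (1 − f)·t·(1/2 − t) + 4Mξ·w/(1 − f), where t = 1 − w/(1 − f). Then for all ξ ∈ [0,1], all w_1, w_2, w_3 ∈ [0, 1/2] and all f_1, f_2, f_3 ∈ [1/13, 1/2] satisfying (1 − f_i)/2 ≤ w_i ≤ 1 − f_i for i = 1,2,3, one has (G_ξ(w_1,f_1)+G_ξ(w_2,f_2))/2 ≤ κ·G_ξ((w_1+w_2)/2, (f_1+f_2)/2) and (G_ξ(w_1,f_1)+G_ξ(w_2,f_2)+G_ξ(w_3,f_3))/3 ≤ κ·G_ξ((w_1+w_2+w_3)/3, (f_1+f_2+f_3)/3). -/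

import Mathlib

/-!
In the variables `w` and `u = 1 − f`, `G_ξ = u·φ(w/u) + c·w/u` with `φ(x) = (1 − x)(x − 1/2)` and
`c = 4Mξ ∈ [0, 0.3432]`. The perspective `u·φ(w/u)` is concave but `c·w/u` is not, so each
`G(w, u)` is bounded by `κ` times the tangent plane `T` of `G` at the centroid `(p, q)`; averaging
the affine `T` over the points returns exactly `G(p, q)`.

Multiplied by `u q²`, `κT − G` is `κ((pu − wq)² − c(u − q)(pu − wq)) + (κ − 1) q² · uG(w, u)`: the
gap of the concave part, a cross term of either sign coming from `c·w/u`, and the slack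
`(κ − 1)G`. This is affine in `c` and clearly nonnegative at `c = 0`, so only `c = 0.3432` needs
work: a case analysis on the signs of `u − q` and `pu − wq`, using that the centroid lies two thirds
of the way from the point to another point of the (convex) domain.
-/

noncomputable def Gxi (ξ w f : ℝ) : ℝ :=
  (1 - f) * ((1 - w / (1 - f)) * (1 / 2 - (1 - w / (1 - f)))) +
    4 * (3 / 2 - Real.sqrt 2) * ξ * w / (1 - f)

local notation "κ" => (1038 / 1000 : ℝ)
local notation "ε" => (38 / 1000 : ℝ)
-- an upper bound for `4M = 6 − 4√2 ≈ 0.343146`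
local notation "C" => (3432 / 10000 : ℝ)

/-- `G_ξ` in the variables `w` and `u = 1 − f`, with `c = 4Mξ`. -/
noncomputable def Gu (c w u : ℝ) : ℝ := (3/2*w*u - 1/2*u^2 - w^2 + c*w) / u

theorem Gxi_eq_Gu (ξ w f : ℝ) : Gxi ξ w f = Gu (4 * (3/2 - Real.sqrt 2) * ξ) w (1 - f) := by
  by_cases hf : 1 - f = 0
  · simp [Gxi, Gu, hf]
  · unfold Gxi Gu
    field_simp
    ring

theorem fourM_mul_mem_Icc {ξ : ℝ} (hξ : ξ ∈ Set.Icc (0 : ℝ) 1) :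
    4 * (3/2 - Real.sqrt 2) * ξ ∈ Set.Icc 0 C := by
  obtain ⟨hξ₀, hξ₁⟩ := hξ
  have hsq : Real.sqrt 2 ^ 2 = 2 := Real.sq_sqrt (by norm_num)
  have hlo : 14142/10000 ≤ Real.sqrt 2 := by nlinarith [Real.sqrt_nonneg 2]
  have hhi : Real.sqrt 2 ≤ 3/2 := by nlinarith [Real.sqrt_nonneg 2]
  constructor <;> nlinarith

def InDomain (w u : ℝ) : Prop := 1/2 ≤ u ∧ u ≤ 12/13 ∧ u ≤ 2*w ∧ w ≤ u

theorem InDomain.convex_comb {w₁ u₁ w₂ u₂ a b : ℝ} (h₁ : InDomain w₁ u₁) (h₂ : InDomain w₂ u₂)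
    (ha : 0 ≤ a) (hb : 0 ≤ b) (hab : a + b = 1) : InDomain (a*w₁ + b*w₂) (a*u₁ + b*u₂) := by
  obtain ⟨h₁₁, h₁₂, h₁₃, h₁₄⟩ := h₁
  obtain ⟨h₂₁, h₂₂, h₂₃, h₂₄⟩ := h₂
  refine ⟨?_, ?_, ?_, ?_⟩ <;> nlinarith [mul_le_mul_of_nonneg_left h₁₁ ha]

/-- The tangent plane of `Gu c` at `(p, q)`, evaluated at `(w, u)`. -/
noncomputable def tangentGu (c p q w u : ℝ) : ℝ :=
  Gu c p q + (3/2*q - 2*p + c) / q * (w - p) + (p^2 - 1/2*q^2 - c*p) / q^2 * (u - q)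

theorem tangentGu_add_two {c p q w₁ u₁ w₂ u₂ : ℝ} (hw : w₁ + w₂ = 2*p) (hu : u₁ + u₂ = 2*q) :
    tangentGu c p q w₁ u₁ + tangentGu c p q w₂ u₂ = 2 * Gu c p q := by
  unfold tangentGu
  linear_combination (3/2*q - 2*p + c) / q * hw + (p^2 - 1/2*q^2 - c*p) / q^2 * hu

theorem tangentGu_add_three {c p q w₁ u₁ w₂ u₂ w₃ u₃ : ℝ} (hw : w₁ + w₂ + w₃ = 3*p)
    (hu : u₁ + u₂ + u₃ = 3*q) :
    tangentGu c p q w₁ u₁ + tangentGu c p q w₂ u₂ + tangentGu c p q w₃ u₃ = 3 * Gu c p q := by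
  unfold tangentGu
  linear_combination (3/2*q - 2*p + c) / q * hw + (p^2 - 1/2*q^2 - c*p) / q^2 * hu

noncomputable def jensenDefect (c w u p q : ℝ) : ℝ :=
  κ * ((p*u - w*q)^2 - c * ((u - q) * (p*u - w*q))) + ε * q^2 * ((u - w) * (2*w - u) / 2 + c*w)

theorem kappa_mul_tangentGu_sub_Gu {c w u p q : ℝ} (hu : u ≠ 0) (hq : q ≠ 0) :
    κ * tangentGu c p q w u - Gu c w u = jensenDefect c w u p q / (u * q^2) := by
  unfold tangentGu Gu jensenDefect
  field_simp
  ring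

/-! The next three bounds treat the case `u ≤ q`, `pu ≤ wq` of `jensenDefect_cmax_nonneg`. With
`s = q − u`, `t = 2w − u` and `e = wq − pu ≤ 4t/13`, the defect there is
`ε(u + s)²((u − t)t/4 + C(u + t)/2) − κe(Cs − e)`, and the concave quadratic in `e` is largest
either at its vertex `e = Cs/2` or at the endpoint `e = 4t/13`. -/

theorem vertex_le_slack {u s : ℝ} (hu : 1/2 ≤ u) (hs : 0 ≤ s) (hus : 2*u + 3*s ≤ 24/13) :
    κ * C * s^2 / 4 ≤ ε * (u/2 + 13*C*s/16) * (u+s)^2 := by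
  nlinarith [mul_nonneg hs (sq_nonneg (u+s)), mul_nonneg (by linarith : (0:ℝ) ≤ u - 1/2) (sq_nonneg (u+s)),
    sq_nonneg s, mul_nonneg hs hs, mul_nonneg (mul_nonneg hs hs) hs,
    mul_nonneg (by linarith : (0:ℝ) ≤ 24/13 - 2*u - 3*s) (sq_nonneg s)]

theorem endpoint_le_slack {u s t : ℝ} (hu : 1/2 ≤ u) (hs : 0 ≤ s)
    (hus : 2*u + 3*s ≤ 24/13) (ht₀ : 0 ≤ t) (htu : t ≤ u) (hts : 8*t ≤ 13*C*s) :
    κ * (4*t/13 * (C*s - 4*t/13)) ≤ ε * (u+s)^2 * ((u-t)*t/4 + C*(u+t)/2) := by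
  nlinarith [mul_nonneg ht₀ (by linarith : (0:ℝ) ≤ 13*C*s - 8*t),
    mul_nonneg (by linarith : (0:ℝ) ≤ 24/13 - 2*u - 3*s) (mul_nonneg hs ht₀),
    mul_nonneg (by linarith : (0:ℝ) ≤ u - 1/2) (mul_nonneg hs ht₀),
    mul_nonneg (by linarith : (0:ℝ) ≤ u - 1/2) (sq_nonneg (u+s)),
    mul_nonneg ht₀ (sq_nonneg (u+s)), mul_nonneg (mul_nonneg ht₀ ht₀) (by linarith : (0:ℝ) ≤ u - t),
    mul_nonneg (by linarith : (0:ℝ) ≤ 24/13 - 2*u - 3*s) (sq_nonneg s),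
    sq_nonneg (s - 2*t), mul_nonneg (mul_nonneg hs hs) ht₀]

theorem cross_term_le_slack {u s t e : ℝ} (hu : 1/2 ≤ u) (hs : 0 ≤ s)
    (hus : 2*u + 3*s ≤ 24/13) (ht₀ : 0 ≤ t) (htu : t ≤ u) (het : 13*e ≤ 4*t) :
    κ * (e * (C*s - e)) ≤ ε * (u+s)^2 * ((u-t)*t/4 + C*(u+t)/2) := by
  rcases le_total (8*t) (13*C*s) with hts | hts
  · have hb := endpoint_le_slack hu hs hus ht₀ htu hts
    nlinarith [mul_nonneg (by linarith : (0:ℝ) ≤ 4*t/13 - e) (by linarith : (0:ℝ) ≤ C*s - e - 4*t/13)]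
  · have hv := vertex_le_slack hu hs hus
    nlinarith [sq_nonneg (2*e - C*s),
      mul_nonneg (by linarith : (0:ℝ) ≤ 8*t - 13*C*s) (sq_nonneg (u+s)),
      mul_nonneg (mul_nonneg ht₀ (by linarith : (0:ℝ) ≤ u - t)) (sq_nonneg (u+s))]

theorem jensenDefect_cmax_nonneg {w u w' u' p q : ℝ} (hx : InDomain w u) (hy : InDomain w' u')
    (hp : 3*p = w + 2*w') (hq : 3*q = u + 2*u') : 0 ≤ jensenDefect C w u p q := by
  obtain ⟨hu₁, hu₂, hwu₁, hwu₂⟩ := hx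
  obtain ⟨hu₁', hu₂', hwu₁', -⟩ := hy
  unfold jensenDefect
  have hG : 0 ≤ (u - w) * (2*w - u) := mul_nonneg (by linarith) (by linarith)
  rcases le_total q u with hs | hs
  · rcases le_total (p*u - w*q) 0 with hd | hd
    · nlinarith [sq_nonneg (p*u-w*q), mul_nonneg (by linarith : (0:ℝ) ≤ u - q) (by linarith : (0:ℝ) ≤ -(p*u-w*q)),
        mul_nonneg (sq_nonneg q) hG, mul_nonneg (by linarith : (0:ℝ) ≤ w) (sq_nonneg q)]
    · -- the cross term is absorbed by the square completed at `pu − wq = C(u − q)/2`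
      have hq' : (1+u)^2 ≤ 9*q^2 := by nlinarith
      have hs' : 9*(u-q)^2 ≤ (2*u-1)^2 := by nlinarith
      have hdisc : κ * C^2 * (u-q)^2/4 ≤ C * ε * (w*q^2) := by
        nlinarith [mul_nonneg (by linarith : (0:ℝ) ≤ 2*w - u) (sq_nonneg q), hq', hs',
          mul_nonneg (by linarith : (0:ℝ) ≤ 12/13 - u) (sq_nonneg (2*u-1)),
          mul_nonneg (by linarith : (0:ℝ) ≤ u - 1/2) (sq_nonneg (1+u))]
      nlinarith [sq_nonneg (p*u-w*q - C/2*(u-q)), mul_nonneg (sq_nonneg q) hG]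
  · rcases le_total 0 (p*u - w*q) with hd | hd
    · nlinarith [sq_nonneg (p*u-w*q), mul_nonneg (by linarith : (0:ℝ) ≤ q - u) hd,
        mul_nonneg (sq_nonneg q) hG, mul_nonneg (by linarith : (0:ℝ) ≤ w) (sq_nonneg q)]
    · -- `3(wq − pu) = 2(wu' − w'u) ≤ u'(2w − u)`
      have he : 13 * (w*q - p*u) ≤ 4 * (2*w - u) := by
        nlinarith [mul_nonneg (by linarith : (0:ℝ) ≤ u) (by linarith : (0:ℝ) ≤ 2*w' - u'),
          mul_nonneg (by linarith : (0:ℝ) ≤ 12/13 - u') (by linarith : (0:ℝ) ≤ 2*w-u)]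
      nlinarith [cross_term_le_slack hu₁ (sub_nonneg.2 hs) (by linarith) (by linarith) (by linarith) he]

theorem jensenDefect_nonneg {c w u w' u' p q : ℝ} (hc₀ : 0 ≤ c) (hc₁ : c ≤ C)
    (hx : InDomain w u) (hy : InDomain w' u') (hp : 3*p = w + 2*w') (hq : 3*q = u + 2*u') :
    0 ≤ jensenDefect c w u p q := by
  have h₀ : 0 ≤ jensenDefect 0 w u p q := by
    obtain ⟨-, -, h₁, h₂⟩ := hx
    have : 0 ≤ (u - w) * (2*w - u) := mul_nonneg (by linarith) (by linarith)
    unfold jensenDefect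
    nlinarith [sq_nonneg (p*u - w*q), mul_nonneg (sq_nonneg q) this]
  have hC := jensenDefect_cmax_nonneg hx hy hp hq
  have h : C * jensenDefect c w u p q =
      (C - c) * jensenDefect 0 w u p q + c * jensenDefect C w u p q := by
    unfold jensenDefect
    ring
  nlinarith [mul_nonneg (sub_nonneg.2 hc₁) h₀, mul_nonneg hc₀ hC]

theorem Gu_le_tangentGu {c w u w' u' p q : ℝ} (hc₀ : 0 ≤ c) (hc₁ : c ≤ C)
    (hx : InDomain w u) (hy : InDomain w' u') (hp : 3*p = w + 2*w') (hq : 3*q = u + 2*u') :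
    Gu c w u ≤ κ * tangentGu c p q w u := by
  have hu : 0 < u := by linarith [hx.1]
  have hq₀ : 0 < q := by linarith [hx.1, hy.1]
  rw [← sub_nonneg, kappa_mul_tangentGu_sub_Gu hu.ne' hq₀.ne']
  exact div_nonneg (jensenDefect_nonneg hc₀ hc₁ hx hy hp hq) (by positivity)

theorem Gu_avg_two_le {c w₁ u₁ w₂ u₂ : ℝ} (hc₀ : 0 ≤ c) (hc₁ : c ≤ C)
    (h₁ : InDomain w₁ u₁) (h₂ : InDomain w₂ u₂) :
    (Gu c w₁ u₁ + Gu c w₂ u₂) / 2 ≤ κ * Gu c ((w₁ + w₂)/2) ((u₁ + u₂)/2) := by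
  have g₁ := Gu_le_tangentGu (p := (w₁ + w₂)/2) (q := (u₁ + u₂)/2) hc₀ hc₁ h₁
    (h₁.convex_comb h₂ (a := 1/4) (b := 3/4) (by norm_num) (by norm_num) (by norm_num))
    (by ring) (by ring)
  have g₂ := Gu_le_tangentGu (p := (w₁ + w₂)/2) (q := (u₁ + u₂)/2) hc₀ hc₁ h₂
    (h₂.convex_comb h₁ (a := 1/4) (b := 3/4) (by norm_num) (by norm_num) (by norm_num))
    (by ring) (by ring)
  have hT := tangentGu_add_two (c := c) (w₁ := w₁) (u₁ := u₁) (w₂ := w₂) (u₂ := u₂)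
    (p := (w₁ + w₂)/2) (q := (u₁ + u₂)/2) (by ring) (by ring)
  linarith

theorem Gu_avg_three_le {c w₁ u₁ w₂ u₂ w₃ u₃ : ℝ} (hc₀ : 0 ≤ c) (hc₁ : c ≤ C)
    (h₁ : InDomain w₁ u₁) (h₂ : InDomain w₂ u₂) (h₃ : InDomain w₃ u₃) :
    (Gu c w₁ u₁ + Gu c w₂ u₂ + Gu c w₃ u₃) / 3 ≤
      κ * Gu c ((w₁ + w₂ + w₃)/3) ((u₁ + u₂ + u₃)/3) := by
  have g₁ := Gu_le_tangentGu (p := (w₁ + w₂ + w₃)/3) (q := (u₁ + u₂ + u₃)/3) hc₀ hc₁ h₁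
    (h₂.convex_comb h₃ (a := 1/2) (b := 1/2) (by norm_num) (by norm_num) (by norm_num))
    (by ring) (by ring)
  have g₂ := Gu_le_tangentGu (p := (w₁ + w₂ + w₃)/3) (q := (u₁ + u₂ + u₃)/3) hc₀ hc₁ h₂
    (h₁.convex_comb h₃ (a := 1/2) (b := 1/2) (by norm_num) (by norm_num) (by norm_num))
    (by ring) (by ring)
  have g₃ := Gu_le_tangentGu (p := (w₁ + w₂ + w₃)/3) (q := (u₁ + u₂ + u₃)/3) hc₀ hc₁ h₃
    (h₁.convex_comb h₂ (a := 1/2) (b := 1/2) (by norm_num) (by norm_num) (by norm_num))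
    (by ring) (by ring)
  have hT := tangentGu_add_three (c := c) (w₁ := w₁) (u₁ := u₁) (w₂ := w₂) (u₂ := u₂)
    (w₃ := w₃) (u₃ := u₃) (p := (w₁ + w₂ + w₃)/3) (q := (u₁ + u₂ + u₃)/3) (by ring) (by ring)
  linarith

theorem Gxi_jensen_general (ξ : ℝ) (hξ : ξ ∈ Set.Icc (0 : ℝ) 1)
    (w₁ w₂ w₃ f₁ f₂ f₃ : ℝ)
    (hf₁ : f₁ ∈ Set.Icc (1 / 13 : ℝ) (1 / 2)) (hf₂ : f₂ ∈ Set.Icc (1 / 13 : ℝ) (1 / 2))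
    (hf₃ : f₃ ∈ Set.Icc (1 / 13 : ℝ) (1 / 2))
    (h₁ : (1 - f₁) / 2 ≤ w₁ ∧ w₁ ≤ 1 - f₁)
    (h₂ : (1 - f₂) / 2 ≤ w₂ ∧ w₂ ≤ 1 - f₂)
    (h₃ : (1 - f₃) / 2 ≤ w₃ ∧ w₃ ≤ 1 - f₃) :
    (Gxi ξ w₁ f₁ + Gxi ξ w₂ f₂) / 2 ≤
        (1038 / 1000) * Gxi ξ ((w₁ + w₂) / 2) ((f₁ + f₂) / 2) ∧
      (Gxi ξ w₁ f₁ + Gxi ξ w₂ f₂ + Gxi ξ w₃ f₃) / 3 ≤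
        (1038 / 1000) * Gxi ξ ((w₁ + w₂ + w₃) / 3) ((f₁ + f₂ + f₃) / 3) := by
  obtain ⟨hc₀, hc₁⟩ := fourM_mul_mem_Icc hξ
  have hD {w f : ℝ} (hf : f ∈ Set.Icc (1 / 13 : ℝ) (1 / 2)) (h : (1 - f) / 2 ≤ w ∧ w ≤ 1 - f) :
      InDomain w (1 - f) :=
    ⟨by linarith [hf.2], by linarith [hf.1], by linarith [h.1], h.2⟩
  simp only [Gxi_eq_Gu]
  constructor
  · have h := Gu_avg_two_le hc₀ hc₁ (hD hf₁ h₁) (hD hf₂ h₂)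
    rwa [show (1 - f₁ + (1 - f₂)) / 2 = 1 - (f₁ + f₂) / 2 by ring] at h
  · have h := Gu_avg_three_le hc₀ hc₁ (hD hf₁ h₁) (hD hf₂ h₂) (hD hf₃ h₃)
    rwa [show (1 - f₁ + (1 - f₂) + (1 - f₃)) / 3 = 1 - (f₁ + f₂ + f₃) / 3 by ring] at h

/-- The averaged Jensen-type inequalities for `G_ξ`, `ξ ∈ [0,1]`, with loss factor
`κ = 1038/1000`, on the region `w_i ∈ [0,1/2]`, `f_i ∈ [1/13,1/2]`,
`(1 − f_i)/2 ≤ w_i ≤ 1 − f_i`. -/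
theorem Gxi_jensen (ξ : ℝ) (hξ : ξ ∈ Set.Icc (0 : ℝ) 1)
    (w₁ w₂ w₃ f₁ f₂ f₃ : ℝ)
    (hw₁ : w₁ ∈ Set.Icc (0 : ℝ) (1 / 2)) (hw₂ : w₂ ∈ Set.Icc (0 : ℝ) (1 / 2))
    (hw₃ : w₃ ∈ Set.Icc (0 : ℝ) (1 / 2))
    (hf₁ : f₁ ∈ Set.Icc (1 / 13 : ℝ) (1 / 2)) (hf₂ : f₂ ∈ Set.Icc (1 / 13 : ℝ) (1 / 2))
    (hf₃ : f₃ ∈ Set.Icc (1 / 13 : ℝ) (1 / 2))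
    (h₁ : (1 - f₁) / 2 ≤ w₁ ∧ w₁ ≤ 1 - f₁)
    (h₂ : (1 - f₂) / 2 ≤ w₂ ∧ w₂ ≤ 1 - f₂)
    (h₃ : (1 - f₃) / 2 ≤ w₃ ∧ w₃ ≤ 1 - f₃) :
    (Gxi ξ w₁ f₁ + Gxi ξ w₂ f₂) / 2 ≤
        (1038 / 1000) * Gxi ξ ((w₁ + w₂) / 2) ((f₁ + f₂) / 2) ∧
      (Gxi ξ w₁ f₁ + Gxi ξ w₂ f₂ + Gxi ξ w₃ f₃) / 3 ≤
        (1038 / 1000) * Gxi ξ ((w₁ + w₂ + w₃) / 3) ((f₁ + f₂ + f₃) / 3) :=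
  Gxi_jensen_general ξ hξ w₁ w₂ w₃ f₁ f₂ f₃ hf₁ hf₂ hf₃ h₁ h₂ h₃
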